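/- arXiv:math/0201209 — 2 statements merged into one kernel-verified Lean document; each statement's English description precedes it below -/
import Mathlib

section
/- Let G ⊊ ℝⁿ be a domain and let 1 ≤ p < ∞. Then for all x, y ∈ G, δ_G^p(x,y) ≤ 2 · j_G^p(x,y), where in δ_G^p the boundary is taken in ℝ̄ⁿ (so it contains ∞ if G is unbounded). -/
open OnePoint

noncomputable section

/-- Inverse hyperbolic cosine: arcosh t = log (t + √(t² − 1)). -/
def arcosh (t : ℝ) : ℝ := Real.log (t + Real.sqrt (t ^ 2 - 1))

/-- Euclidean n-space. -/
abbrev En (n : ℕ) : Type := EuclideanSpace ℝ (Fin n)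

/-- The chordal (spherical) metric on the one-point compactification ℝ̄ⁿ of ℝⁿ. -/
def chordal {n : ℕ} : OnePoint (En n) → OnePoint (En n) → ℝ
  | ∞, ∞ => 0
  | ∞, (y : En n) => 1 / Real.sqrt (1 + ‖y‖ ^ 2)
  | (x : En n), ∞ => 1 / Real.sqrt (1 + ‖x‖ ^ 2)
  | (x : En n), (y : En n) => ‖x - y‖ / (Real.sqrt (1 + ‖x‖ ^ 2) * Real.sqrt (1 + ‖y‖ ^ 2))

/-- The cross-ratio |a,b,c,d| = q(a,c)q(b,d)/(q(a,b)q(c,d)) in the chordal metric. -/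
def crossRatio {n : ℕ} (a b c d : OnePoint (En n)) : ℝ :=
  chordal a c * chordal b d / (chordal a b * chordal c d)

/-- The generalized hyperbolic metric ρ_G(x,y) = sup_{a,b ∈ ∂G} arcosh(1 + |a,x,b,y||a,y,b,x|/2). -/
def rho {n : ℕ} (G : Set (OnePoint (En n))) (x y : OnePoint (En n)) : ℝ :=
  sSup {r : ℝ | ∃ a ∈ frontier G, ∃ b ∈ frontier G,
    r = arcosh (1 + crossRatio a x b y * crossRatio a y b x / 2)}

/-- Seittenranta's metric δ_G(x,y) = sup_{a,b ∈ ∂G} log(1 + |a,x,b,y|). -/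
def seittenranta {n : ℕ} (G : Set (OnePoint (En n))) (x y : OnePoint (En n)) : ℝ :=
  sSup {r : ℝ | ∃ a ∈ frontier G, ∃ b ∈ frontier G,
    r = Real.log (1 + crossRatio a x b y)}

/-- The j-metric j_G(x,y) = log(1 + |x−y|/min(d(x,∂G), d(y,∂G))). -/
def jMetric {n : ℕ} (G : Set (En n)) (x y : En n) : ℝ :=
  Real.log (1 + ‖x - y‖ / min (Metric.infDist x (frontier G)) (Metric.infDist y (frontier G)))

/-- The metric δ_G^p(x,y) = sup_{a,b ∈ ∂G} log(1 + (|x,a,y,b|^p + |x,b,y,a|^p)^(1/p)). -/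
def deltaP {n : ℕ} (p : ℝ) (G : Set (OnePoint (En n))) (x y : OnePoint (En n)) : ℝ :=
  sSup {r : ℝ | ∃ a ∈ frontier G, ∃ b ∈ frontier G,
    r = Real.log (1 + (crossRatio x a y b ^ p + crossRatio x b y a ^ p) ^ (1 / p))}

/-- The metric j_G^p(x,y) = sup_{a ∈ ∂G} log(1 + (|x−y|^p/|x−a|^p + |x−y|^p/|y−a|^p)^(1/p)). -/
def jP {n : ℕ} (p : ℝ) (G : Set (En n)) (x y : En n) : ℝ :=
  sSup {r : ℝ | ∃ a ∈ frontier G,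
    r = Real.log (1 + (‖x - y‖ ^ p / ‖x - a‖ ^ p + ‖x - y‖ ^ p / ‖y - a‖ ^ p) ^ (1 / p))}

/-!
With `r₁ = |x-y|/|x-a|`, `r₂ = |x-y|/|y-a|`, `r₃ = |x-y|/|x-b|`, `r₄ = |x-y|/|y-b|`, the
triangle inequality `|a-b| ≤ |x-a| + |x-y| + |y-b|` gives `|x,a,y,b| ≤ r₁ + r₄ + r₁r₄` and
`|x,b,y,a| ≤ r₃ + r₂ + r₃r₂`. Minkowski's inequality for the `ℓᵖ`-norm `‖·‖ₚ = lpPairNorm p`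
on `ℝ²`, together with `‖(r₁r₄, r₂r₃)‖ₚ ≤ ‖(r₁, r₂)‖ₚ ‖(r₃, r₄)‖ₚ`, then yields
`1 + ‖(|x,a,y,b|, |x,b,y,a|)‖ₚ ≤ (1 + ‖(r₁, r₂)‖ₚ)(1 + ‖(r₃, r₄)‖ₚ)`, and after taking logarithms
each factor is bounded by `j_G^p(x,y)`. A boundary point at `∞` contributes a single factor.
-/

open OnePoint Real Metric

def lpPairNorm (p u v : ℝ) : ℝ := (u ^ p + v ^ p) ^ (1 / p)

section lpPairNorm

variable {p u v : ℝ}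

lemma lpPairNorm_comm (p u v : ℝ) : lpPairNorm p u v = lpPairNorm p v u := by
  rw [lpPairNorm, lpPairNorm, add_comm]

lemma lpPairNorm_nonneg (hu : 0 ≤ u) (hv : 0 ≤ v) : 0 ≤ lpPairNorm p u v := by
  unfold lpPairNorm
  positivity

lemma lpPairNorm_zero_zero (hp : p ≠ 0) : lpPairNorm p 0 0 = 0 := by
  simp [lpPairNorm, zero_rpow hp, hp]

lemma lpPairNorm_le_lpPairNorm {u' v' : ℝ} (hp : 0 ≤ p) (hu : 0 ≤ u) (hv : 0 ≤ v)
    (huu' : u ≤ u') (hvv' : v ≤ v') : lpPairNorm p u v ≤ lpPairNorm p u' v' := by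
  unfold lpPairNorm
  gcongr

lemma lpPairNorm_add_le (hp : 1 ≤ p) {u₁ v₁ u₂ v₂ : ℝ} (hu₁ : 0 ≤ u₁) (hv₁ : 0 ≤ v₁)
    (hu₂ : 0 ≤ u₂) (hv₂ : 0 ≤ v₂) :
    lpPairNorm p (u₁ + u₂) (v₁ + v₂) ≤ lpPairNorm p u₁ v₁ + lpPairNorm p u₂ v₂ := by
  have h := Lp_add_le_of_nonneg (s := Finset.univ) (f := ![u₁, v₁]) (g := ![u₂, v₂]) hp
    (by intro i _; fin_cases i <;> assumption) (by intro i _; fin_cases i <;> assumption)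
  simpa [lpPairNorm, Fin.sum_univ_two] using h

lemma lpPairNorm_mul_le (hp : 0 ≤ p) {a b c d : ℝ} (ha : 0 ≤ a) (hb : 0 ≤ b) (hc : 0 ≤ c)
    (hd : 0 ≤ d) : lpPairNorm p (a * d) (b * c) ≤ lpPairNorm p a b * lpPairNorm p c d := by
  unfold lpPairNorm
  rw [← mul_rpow (by positivity) (by positivity)]
  gcongr
  rw [mul_rpow ha hd, mul_rpow hb hc]
  nlinarith [rpow_nonneg ha p, rpow_nonneg hb p, rpow_nonneg hc p, rpow_nonneg hd p]

lemma one_add_lpPairNorm_le_mul (hp : 1 ≤ p) {r₁ r₂ r₃ r₄ : ℝ} (h₁ : 0 ≤ r₁) (h₂ : 0 ≤ r₂)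
    (h₃ : 0 ≤ r₃) (h₄ : 0 ≤ r₄) (hu : 0 ≤ u) (hv : 0 ≤ v)
    (hur : u ≤ r₁ + r₄ + r₁ * r₄) (hvr : v ≤ r₃ + r₂ + r₃ * r₂) :
    1 + lpPairNorm p u v ≤ (1 + lpPairNorm p r₁ r₂) * (1 + lpPairNorm p r₃ r₄) := by
  have hp0 : 0 ≤ p := zero_le_one.trans hp
  have hA := lpPairNorm_nonneg (p := p) h₁ h₂
  have hB := lpPairNorm_nonneg (p := p) h₃ h₄
  have : lpPairNorm p u v ≤
      lpPairNorm p r₁ r₂ + (lpPairNorm p r₃ r₄ + lpPairNorm p r₁ r₂ * lpPairNorm p r₃ r₄) :=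
    calc lpPairNorm p u v
        ≤ lpPairNorm p (r₁ + (r₄ + r₁ * r₄)) (r₂ + (r₃ + r₂ * r₃)) :=
          lpPairNorm_le_lpPairNorm hp0 hu hv (by linarith) (by linarith)
      _ ≤ lpPairNorm p r₁ r₂ + lpPairNorm p (r₄ + r₁ * r₄) (r₃ + r₂ * r₃) :=
          lpPairNorm_add_le hp h₁ h₂ (by positivity) (by positivity)
      _ ≤ lpPairNorm p r₁ r₂ + (lpPairNorm p r₄ r₃ + lpPairNorm p (r₁ * r₄) (r₂ * r₃)) := by
          gcongr
          exact lpPairNorm_add_le hp h₄ h₃ (by positivity) (by positivity)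
      _ ≤ _ := by
          rw [lpPairNorm_comm p r₄]
          gcongr
          exact lpPairNorm_mul_le hp0 h₁ h₂ h₃ h₄
  nlinarith

end lpPairNorm

section

variable {n : ℕ}

lemma chordal_nonneg (a b : OnePoint (En n)) : 0 ≤ chordal a b := by
  cases a <;> cases b <;> simp only [chordal] <;> positivity

lemma crossRatio_nonneg (a b c d : OnePoint (En n)) : 0 ≤ crossRatio a b c d :=
  div_nonneg (mul_nonneg (chordal_nonneg _ _) (chordal_nonneg _ _))
    (mul_nonneg (chordal_nonneg _ _) (chordal_nonneg _ _))

lemma crossRatio_coe (x a y b : En n) :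
    crossRatio (x : OnePoint (En n)) a y b = ‖x - y‖ * ‖a - b‖ / (‖x - a‖ * ‖y - b‖) := by
  simp only [crossRatio, chordal]
  rw [div_mul_div_comm, div_mul_div_comm, mul_mul_mul_comm _ (√(1 + ‖a‖ ^ 2)),
    div_div_div_cancel_right₀ (by positivity)]

lemma crossRatio_coe_coe_coe_infty (x a y : En n) :
    crossRatio (x : OnePoint (En n)) a y ∞ = ‖x - y‖ / ‖x - a‖ := by
  simp only [crossRatio, chordal]
  rw [div_mul_div_comm, div_mul_div_comm, mul_one, mul_one, mul_right_comm _ (√(1 + ‖y‖ ^ 2)),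
    div_div_div_cancel_right₀ (by positivity)]

lemma crossRatio_coe_infty_coe_coe (x y b : En n) :
    crossRatio (x : OnePoint (En n)) ∞ y b = ‖x - y‖ / ‖y - b‖ := by
  simp only [crossRatio, chordal]
  rw [div_mul_div_comm, div_mul_div_comm, mul_one, one_mul, ← mul_assoc,
    div_div_div_cancel_right₀ (by positivity)]

lemma crossRatio_coe_infty_coe_infty (x y : En n) :
    crossRatio (x : OnePoint (En n)) ∞ y ∞ = 0 := by
  simp [crossRatio, chordal]

lemma crossRatio_coe_le (x a y b : En n) :
    crossRatio (x : OnePoint (En n)) a y b ≤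
      ‖x - y‖ / ‖x - a‖ + ‖x - y‖ / ‖y - b‖ + ‖x - y‖ / ‖x - a‖ * (‖x - y‖ / ‖y - b‖) := by
  rw [crossRatio_coe]
  obtain hxa | hxa := (norm_nonneg (x - a)).eq_or_lt
  · rw [← hxa, zero_mul, div_zero]
    positivity
  obtain hyb | hyb := (norm_nonneg (y - b)).eq_or_lt
  · rw [← hyb, mul_zero, div_zero]
    positivity
  have htri : ‖a - b‖ ≤ ‖x - a‖ + ‖x - y‖ + ‖y - b‖ := by
    simpa only [dist_eq_norm, norm_sub_rev a x] using dist_triangle4 a x y b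
  calc ‖x - y‖ * ‖a - b‖ / (‖x - a‖ * ‖y - b‖)
      ≤ ‖x - y‖ * (‖x - a‖ + ‖x - y‖ + ‖y - b‖) / (‖x - a‖ * ‖y - b‖) := by gcongr
    _ = _ := by field_simp; ring

lemma log_one_add_lpPairNorm_crossRatio_le {p : ℝ} (hp : 1 ≤ p) (x y a b : En n) :
    log (1 + lpPairNorm p (crossRatio (x : OnePoint (En n)) a y b)
        (crossRatio (x : OnePoint (En n)) b y a)) ≤
      log (1 + lpPairNorm p (‖x - y‖ / ‖x - a‖) (‖x - y‖ / ‖y - a‖)) +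
        log (1 + lpPairNorm p (‖x - y‖ / ‖x - b‖) (‖x - y‖ / ‖y - b‖)) := by
  have hpos : ∀ {u v : ℝ}, 0 ≤ u → 0 ≤ v → 0 < 1 + lpPairNorm p u v := fun hu hv ↦
    add_pos_of_pos_of_nonneg one_pos (lpPairNorm_nonneg hu hv)
  rw [← log_mul (hpos (by positivity) (by positivity)).ne'
    (hpos (by positivity) (by positivity)).ne']
  exact log_le_log (hpos (crossRatio_nonneg _ _ _ _) (crossRatio_nonneg _ _ _ _))
    (one_add_lpPairNorm_le_mul hp (by positivity) (by positivity) (by positivity) (by positivity)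
      (crossRatio_nonneg _ _ _ _) (crossRatio_nonneg _ _ _ _)
      (crossRatio_coe_le x a y b) (crossRatio_coe_le x b y a))

lemma coe_mem_frontier_image_coe {X : Type*} [TopologicalSpace X] {G : Set X} {b : X} :
    (b : OnePoint X) ∈ frontier (((↑) : X → OnePoint X) '' G) ↔ b ∈ frontier G := by
  rw [← Set.mem_preimage, isOpenMap_coe.preimage_frontier_eq_frontier_preimage continuous_coe,
    Set.preimage_image_eq _ coe_injective]

lemma jP_nonneg (p : ℝ) (G : Set (En n)) (x y : En n) : 0 ≤ jP p G x y := by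
  apply Real.sSup_nonneg
  rintro _ ⟨a, -, rfl⟩
  exact log_nonneg (le_add_of_nonneg_right (by positivity))

lemma log_one_add_lpPairNorm_le_jP {p : ℝ} (hp : 0 ≤ p) {G : Set (En n)} {x y a : En n}
    (hx : x ∉ frontier G) (hy : y ∉ frontier G) (ha : a ∈ frontier G) :
    log (1 + lpPairNorm p (‖x - y‖ / ‖x - a‖) (‖x - y‖ / ‖y - a‖)) ≤ jP p G x y := by
  have hdist : ∀ z ∉ frontier G, 0 < infDist z (frontier G) := fun z hz ↦
    (isClosed_frontier.notMem_iff_infDist_pos ⟨a, ha⟩).mp hz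
  have hx₀ := hdist x hx
  have hy₀ := hdist y hy
  refine le_csSup ⟨log (1 + (‖x - y‖ ^ p / infDist x (frontier G) ^ p +
    ‖x - y‖ ^ p / infDist y (frontier G) ^ p) ^ (1 / p)), ?_⟩
    ⟨a, ha, by rw [lpPairNorm, div_rpow (norm_nonneg _) (norm_nonneg _),
      div_rpow (norm_nonneg _) (norm_nonneg _)]⟩
  rintro _ ⟨b, hb, rfl⟩
  have hle : ∀ z, infDist z (frontier G) ≤ ‖z - b‖ := fun z ↦
    dist_eq_norm z b ▸ infDist_le_dist_of_mem hb
  have hxb := hx₀.trans_le (hle x)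
  have hyb := hy₀.trans_le (hle y)
  gcongr
  · exact hle x
  · exact hle y

end

theorem deltaP_le_two_mul_jP_general (n : ℕ) (G : Set (En n))
    (hopen : IsOpen G)
    (p : ℝ) (hp : 1 ≤ p)
    (x y : En n) (hx : x ∈ G) (hy : y ∈ G) :
    deltaP p (((↑) : En n → OnePoint (En n)) '' G) (x : OnePoint (En n)) (y : OnePoint (En n)) ≤
      2 * jP p G x y := by
  have hxG : x ∉ frontier G := fun h ↦ h.2 (hopen.interior_eq.symm ▸ hx)
  have hyG : y ∉ frontier G := fun h ↦ h.2 (hopen.interior_eq.symm ▸ hy)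
  have hj : ∀ {a : En n},
      (a : OnePoint (En n)) ∈ frontier (((↑) : En n → OnePoint (En n)) '' G) →
        log (1 + lpPairNorm p (‖x - y‖ / ‖x - a‖) (‖x - y‖ / ‖y - a‖)) ≤ jP p G x y :=
    fun ha ↦
      log_one_add_lpPairNorm_le_jP (by linarith) hxG hyG (coe_mem_frontier_image_coe.mp ha)
  have hj₀ := jP_nonneg p G x y
  refine Real.sSup_le ?_ (by linarith)
  rintro _ ⟨a, ha, b, hb, rfl⟩
  change log (1 + lpPairNorm p _ _) ≤ _
  cases a with
  | infty => cases b with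
    | infty =>
      rw [crossRatio_coe_infty_coe_infty, lpPairNorm_zero_zero (by linarith), add_zero, log_one]
      linarith
    | coe b =>
      rw [crossRatio_coe_infty_coe_coe, crossRatio_coe_coe_coe_infty, lpPairNorm_comm]
      linarith [hj hb]
  | coe a => cases b with
    | infty =>
      rw [crossRatio_coe_coe_coe_infty, crossRatio_coe_infty_coe_coe]
      linarith [hj ha]
    | coe b => linarith [log_one_add_lpPairNorm_crossRatio_le hp x y a b, hj ha, hj hb]

/-- δ_G^p ≤ 2 · j_G^p for 1 ≤ p < ∞ and a proper subdomain G of ℝⁿ, where in δ_G^p the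
boundary is taken in ℝ̄ⁿ = ℝⁿ ∪ {∞}. -/
theorem deltaP_le_two_mul_jP (n : ℕ) (hn : 2 ≤ n) (G : Set (En n))
    (hopen : IsOpen G) (hconn : IsConnected G) (hne : G ≠ Set.univ)
    (p : ℝ) (hp : 1 ≤ p)
    (x y : En n) (hx : x ∈ G) (hy : y ∈ G) :
    deltaP p (((↑) : En n → OnePoint (En n)) '' G) (x : OnePoint (En n)) (y : OnePoint (En n)) ≤
      2 * jP p G x y :=
  deltaP_le_two_mul_jP_general n G hopen p hp x y hx hy
end
end

section
/- Let x, y ∈ ℝⁿ be nonzero points with |x| ≤ |y| and |x|·|y| ≤ 1. Then arcosh(1 + |x−y|²/(2|x||y|)) ≤ (arcosh 3 / log 2) · log(1 + |x−y|/(|x| + |x||y|)). -/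
/-!
Write a = |x|, b = |y|, d = |x - y|, w = d / (2√(ab)) and u = d / (a + ab). Since
cosh 2z = 1 + 2 sinh² z, the left side is 2 arsinh w, and arcosh 3 = 2 arsinh 1, so the claim
reads log 2 · arsinh w ≤ arsinh 1 · log (1 + u). The hypotheses give w ≤ u, because
a + ab ≤ 2√(ab), and 2w ≤ 1 + u, because d ≤ a + b.

For w ≤ 1 it suffices that arsinh t / log (1 + t) increases on (0, 1]. In the variable
s = log (1 + t) this is the convexity of s ↦ arsinh (eˢ - 1) for s ≤ log 2: its derivative is
(1 + t) / √(1 + t²), which increases for t ≤ 1. For w > 1 we use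
arsinh w ≤ arsinh 1 + log w together with log (1 + u) ≥ log (2w).
-/

noncomputable section

open Real hiding arcosh
open Set

lemma arcosh_eq_real_arcosh : arcosh = Real.arcosh := rfl

lemma arcosh_one_add_two_mul_sq {w : ℝ} (hw : 0 ≤ w) :
    arcosh (1 + 2 * w ^ 2) = 2 * arsinh w := by
  have hcosh : cosh (2 * arsinh w) = 1 + 2 * w ^ 2 := by
    rw [cosh_two_mul, cosh_sq, sinh_arsinh]; ring
  rw [← hcosh, arcosh_eq_real_arcosh,
    Real.arcosh_cosh (mul_nonneg zero_le_two (arsinh_nonneg_iff.2 hw))]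

lemma arcosh_three : arcosh 3 = 2 * arsinh 1 := by
  convert arcosh_one_add_two_mul_sq zero_le_one using 2
  norm_num

lemma monotoneOn_one_add_div_sqrt_one_add_sq :
    MonotoneOn (fun t : ℝ => (1 + t) / √(1 + t ^ 2)) (Icc (-1) 1) := by
  intro s hs t ht hst
  have hst1 : s * t ≤ 1 := by nlinarith [hs.1, hs.2, ht.1, ht.2]
  dsimp only
  rw [div_le_div_iff₀ (by positivity) (by positivity), ← sqrt_sq (by linarith [hs.1] : 0 ≤ 1 + s),
    ← sqrt_sq (by linarith [ht.1] : 0 ≤ 1 + t), ← sqrt_mul (sq_nonneg _), ← sqrt_mul (sq_nonneg _)]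
  apply sqrt_le_sqrt
  nlinarith [mul_nonneg (sub_nonneg.2 hst) (sub_nonneg.2 hst1)]

lemma hasDerivAt_arsinh_exp_sub_one (s : ℝ) :
    HasDerivAt (fun s => arsinh (exp s - 1)) ((1 + (exp s - 1)) / √(1 + (exp s - 1) ^ 2)) s := by
  convert ((hasDerivAt_exp s).sub_const 1).arsinh using 1
  rw [add_sub_cancel, div_eq_inv_mul, smul_eq_mul]

lemma convexOn_arsinh_exp_sub_one : ConvexOn ℝ (Iic (log 2)) (fun s => arsinh (exp s - 1)) := by
  have hderiv := fun s => hasDerivAt_arsinh_exp_sub_one s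
  refine MonotoneOn.convexOn_of_deriv (convex_Iic _)
    (fun s _ => (hderiv s).continuousAt.continuousWithinAt)
    (fun s _ => (hderiv s).differentiableAt.differentiableWithinAt) ?_
  rw [interior_Iic]
  intro s hs t ht hst
  rw [(hderiv s).deriv, (hderiv t).deriv]
  have hexp : ∀ r ∈ Iio (log 2), exp r - 1 ∈ Icc (-1) 1 := fun r hr => by
    have := exp_lt_exp.2 hr
    rw [exp_log two_pos] at this
    constructor <;> linarith [exp_pos r]
  exact monotoneOn_one_add_div_sqrt_one_add_sq (hexp s hs) (hexp t ht) (by gcongr)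

lemma log_two_mul_arsinh_le {t : ℝ} (ht0 : 0 ≤ t) (ht1 : t ≤ 1) :
    log 2 * arsinh t ≤ arsinh 1 * log (1 + t) := by
  obtain rfl | htpos := ht0.eq_or_lt
  · simp
  have hL : 0 < log 2 := log_pos one_lt_two
  have hs : 0 < log (1 + t) := log_pos (by linarith)
  have hsL : log (1 + t) ≤ log 2 := log_le_log (by linarith) (by linarith)
  have hsecant := convexOn_arsinh_exp_sub_one.secant_mono (a := 0) hL.le hsL (mem_Iic.2 le_rfl)
    hs.ne' hL.ne' hsL
  norm_num [exp_log two_pos, exp_log (by linarith : 0 < 1 + t)] at hsecant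
  rw [div_le_div_iff₀ hs hL] at hsecant
  linarith

lemma arsinh_le_arsinh_one_add_log {w : ℝ} (hw : 1 ≤ w) : arsinh w ≤ arsinh 1 + log w := by
  have hsqrt : √(1 + w ^ 2) ≤ √(1 + 1 ^ 2) * w := by
    rw [← sqrt_sq (by linarith : 0 ≤ w), ← sqrt_mul (by positivity), sqrt_sq (by linarith)]
    exact sqrt_le_sqrt (by nlinarith)
  calc arsinh w = log (w + √(1 + w ^ 2)) := rfl
    _ ≤ log ((1 + √(1 + 1 ^ 2)) * w) := log_le_log (by positivity) (by linarith)
    _ = arsinh 1 + log w := log_mul (by positivity) (by positivity)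

lemma log_two_le_arsinh_one : log 2 ≤ arsinh 1 :=
  log_le_log two_pos (by norm_num; linarith [one_lt_sqrt_two])

lemma log_two_mul_arsinh_le_of_two_mul_le {w u : ℝ} (hw : 0 ≤ w) (hwu : w ≤ u)
    (h2w : 2 * w ≤ 1 + u) : log 2 * arsinh w ≤ arsinh 1 * log (1 + u) := by
  have hL : 0 < log 2 := log_pos one_lt_two
  have hLA := log_two_le_arsinh_one
  rcases le_or_gt w 1 with hw1 | hw1
  · calc log 2 * arsinh w ≤ arsinh 1 * log (1 + w) := log_two_mul_arsinh_le hw hw1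
      _ ≤ arsinh 1 * log (1 + u) := by gcongr; linarith
  · have hY : log 2 ≤ log (1 + u) := log_le_log two_pos (by linarith)
    have hYw : log 2 + log w ≤ log (1 + u) := by
      rw [← log_mul two_ne_zero (by positivity)]
      exact log_le_log (by positivity) h2w
    have := arsinh_le_arsinh_one_add_log hw1.le
    nlinarith [mul_nonneg (sub_nonneg.2 hLA) (sub_nonneg.2 hY)]

lemma le_sqrt_mul_of_le {a b : ℝ} (ha : 0 ≤ a) (hab : a ≤ b) : a ≤ √(a * b) :=
  le_sqrt_of_sq_le (by nlinarith)

lemma add_mul_le_two_mul_sqrt_mul {a b : ℝ} (ha : 0 ≤ a) (hab : a ≤ b) (hprod : a * b ≤ 1) :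
    a + a * b ≤ 2 * √(a * b) := by
  linarith [le_sqrt_mul_of_le ha hab, le_sqrt_self_iff.2 hprod]

lemma div_sqrt_mul_le_one_add_div {a b d : ℝ} (ha : 0 < a) (hab : a ≤ b) (hprod : a * b ≤ 1)
    (hd : 0 ≤ d) (hdab : d ≤ a + b) : d / √(a * b) ≤ 1 + d / (a + a * b) := by
  have has := le_sqrt_mul_of_le ha.le hab
  have hs1 : √(a * b) ≤ 1 := sqrt_le_one.2 hprod
  have hs2 : a * b = √(a * b) ^ 2 := (sq_sqrt (by nlinarith)).symm
  set s := √(a * b)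
  have hs : 0 < s := ha.trans_le has
  rw [hs2, div_le_iff₀ hs, add_mul, one_mul, div_mul_eq_mul_div, ← sub_le_iff_le_add',
    le_div_iff₀ (by positivity)]
  rcases le_or_gt (a + s ^ 2 - s) 0 with hneg | hpos
  · nlinarith [mul_le_mul_of_nonneg_left hneg hd, mul_pos hs (by positivity : 0 < a + s ^ 2)]
  · have had : a * d ≤ a ^ 2 + s ^ 2 := by nlinarith
    have hpoly : (a ^ 2 + s ^ 2) * (a + s ^ 2 - s) ≤ a * s * (a + s ^ 2) := by
      nlinarith [mul_nonneg (sq_nonneg a) (sub_nonneg.2 has),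
        mul_nonneg (mul_nonneg (sq_nonneg a) hs.le) (sub_nonneg.2 hs1),
        mul_nonneg (mul_nonneg (sq_nonneg s) (sub_nonneg.2 hs1)) (sub_nonneg.2 has)]
    nlinarith [mul_le_mul_of_nonneg_right had hpos.le]

theorem arcosh_le_const_mul_log_of_norm_general (n : ℕ) (x y : En n)
    (hx : x ≠ 0) (hxy : ‖x‖ ≤ ‖y‖) (hprod : ‖x‖ * ‖y‖ ≤ 1) :
    arcosh (1 + ‖x - y‖ ^ 2 / (2 * ‖x‖ * ‖y‖)) ≤
      (arcosh 3 / Real.log 2) * Real.log (1 + ‖x - y‖ / (‖x‖ + ‖x‖ * ‖y‖)) := by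
  have ha : 0 < ‖x‖ := norm_pos_iff.2 hx
  have hd : 0 ≤ ‖x - y‖ := norm_nonneg _
  set w := ‖x - y‖ / (2 * √(‖x‖ * ‖y‖))
  set u := ‖x - y‖ / (‖x‖ + ‖x‖ * ‖y‖)
  have hw : 0 ≤ w := by positivity
  have hwu : w ≤ u := div_le_div_of_nonneg_left hd (by positivity)
    (add_mul_le_two_mul_sqrt_mul ha.le hxy hprod)
  have h2w : 2 * w ≤ 1 + u := by
    rw [show 2 * w = ‖x - y‖ / √(‖x‖ * ‖y‖) by ring]
    exact div_sqrt_mul_le_one_add_div ha hxy hprod hd (norm_sub_le x y)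
  have harg : 1 + ‖x - y‖ ^ 2 / (2 * ‖x‖ * ‖y‖) = 1 + 2 * w ^ 2 := by
    rw [div_pow, mul_pow, sq_sqrt (by positivity)]
    field_simp
  rw [harg, arcosh_one_add_two_mul_sq hw, arcosh_three, mul_div_assoc, mul_assoc]
  gcongr 2 * ?_
  rw [div_mul_eq_mul_div, le_div_iff₀ (log_pos one_lt_two), mul_comm]
  exact log_two_mul_arsinh_le_of_two_mul_le hw hwu h2w

/-- For nonzero x, y ∈ ℝⁿ with |x| ≤ |y| and |x||y| ≤ 1,
arcosh(1 + |x−y|²/(2|x||y|)) ≤ (arcosh 3 / log 2) · log(1 + |x−y|/(|x| + |x||y|)). -/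
theorem arcosh_le_const_mul_log_of_norm (n : ℕ) (hn : 2 ≤ n) (x y : En n)
    (hx : x ≠ 0) (hy : y ≠ 0) (hxy : ‖x‖ ≤ ‖y‖) (hprod : ‖x‖ * ‖y‖ ≤ 1) :
    arcosh (1 + ‖x - y‖ ^ 2 / (2 * ‖x‖ * ‖y‖)) ≤
      (arcosh 3 / Real.log 2) * Real.log (1 + ‖x - y‖ / (‖x‖ + ‖x‖ * ‖y‖)) :=
  arcosh_le_const_mul_log_of_norm_general n x y hx hxy hprod

end
end
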